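/- arXiv:2407.02609 — 6 statements merged into one kernel-verified Lean document; each statement's English description precedes it below -/
import Mathlib

section
/- For all real numbers u, v and all α ∈ (0,1), there exists a constant c depending only on α such that |u - v| ≤ c · ||u|^{α-1}u - |v|^{α-1}v| · (|u|^{1-α} + |v|^{1-α}). -/
open Real

private lemma spdb_gnonneg {α u : ℝ} (hα : α ≠ 0) (hu : 0 ≤ u) :
    |u| ^ (α - 1) * u = u ^ α := by
  rcases eq_or_lt_of_le hu with h | h
  · subst h
    simp [Real.zero_rpow hα]
  · rw [abs_of_pos h, ← Real.rpow_add_one h.ne' (α - 1)]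
    norm_num

private lemma spdb_keyA {α : ℝ} (hα0 : 0 < α) (hα1 : α < 1) {u v : ℝ} (hv : 0 ≤ v)
    (hvu : v ≤ u) : α * (u - v) ≤ (u ^ α - v ^ α) * (u ^ (1 - α) + v ^ (1 - α)) := by
  have hu : 0 ≤ u := hv.trans hvu
  have amgm : v ^ α * u ^ (1 - α) ≤ α * v + (1 - α) * u :=
    Real.geom_mean_le_arith_mean2_weighted hα0.le (by linarith) hv hu (by ring)
  have h1 : u ^ α * u ^ (1 - α) = u := by
    rw [← Real.rpow_add' hu (by norm_num)]
    simp
  have hsub : v ^ α ≤ u ^ α := Real.rpow_le_rpow hv hvu hα0.le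
  have hp : 0 ≤ (u ^ α - v ^ α) * v ^ (1 - α) :=
    mul_nonneg (by linarith) (Real.rpow_nonneg hv _)
  nlinarith [hp, h1, amgm]

theorem signed_power_diff_bound (α : ℝ) (hα0 : 0 < α) (hα1 : α < 1) :
    ∃ c : ℝ, 0 < c ∧ ∀ u v : ℝ,
      |u - v| ≤ c * |(|u| ^ (α - 1) * u) - (|v| ^ (α - 1) * v)| *
        (|u| ^ (1 - α) + |v| ^ (1 - α)) := by
  -- key lemma for v ≤ u
  have key : ∀ u v : ℝ, v ≤ u →
      α * (u - v) ≤ |(|u| ^ (α - 1) * u) - (|v| ^ (α - 1) * v)| *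
        (|u| ^ (1 - α) + |v| ^ (1 - α)) := by
    intro u v hvu
    rcases le_total 0 v with hv | hv
    · have hu : 0 ≤ u := hv.trans hvu
      rw [spdb_gnonneg hα0.ne' hu, spdb_gnonneg hα0.ne' hv, abs_of_nonneg hu, abs_of_nonneg hv,
        abs_of_nonneg (by linarith [Real.rpow_le_rpow hv hvu hα0.le] : (0:ℝ) ≤ u ^ α - v ^ α)]
      exact spdb_keyA hα0 hα1 hv hvu
    · rcases le_total u 0 with hu | hu
      · -- both nonpositive
        have h1 : |u| ^ (α - 1) * u = -((-u) ^ α) := by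
          have := spdb_gnonneg hα0.ne' (by linarith : (0:ℝ) ≤ -u)
          rw [abs_neg] at this
          linarith [this]
        have h2 : |v| ^ (α - 1) * v = -((-v) ^ α) := by
          have := spdb_gnonneg hα0.ne' (by linarith : (0:ℝ) ≤ -v)
          rw [abs_neg] at this
          linarith [this]
        have hmono : (-u) ^ α ≤ (-v) ^ α :=
          Real.rpow_le_rpow (by linarith) (by linarith) hα0.le
        rw [h1, h2, abs_of_nonpos hu, abs_of_nonpos hv,
          abs_of_nonneg (by linarith : (0:ℝ) ≤ -((-u) ^ α) - -((-v) ^ α))]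
        have hk := spdb_keyA hα0 hα1 (by linarith : (0:ℝ) ≤ -u) (by linarith : -u ≤ -v)
        nlinarith [hk]
      · -- v ≤ 0 ≤ u
        rw [spdb_gnonneg hα0.ne' hu, abs_of_nonneg hu]
        have h2 : |v| ^ (α - 1) * v = -((-v) ^ α) := by
          have := spdb_gnonneg hα0.ne' (by linarith : (0:ℝ) ≤ -v)
          rw [abs_neg] at this
          linarith [this]
        rw [h2, abs_of_nonpos hv]
        have hnv : (0:ℝ) ≤ -v := by linarith
        have hA : u ^ α * u ^ (1 - α) = u := by
          rw [← Real.rpow_add' hu (by norm_num)]; simp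
        have hB : (-v) ^ α * (-v) ^ (1 - α) = -v := by
          rw [← Real.rpow_add' hnv (by norm_num)]; simp
        have h3 : (0:ℝ) ≤ u ^ α + (-v) ^ α := by positivity
        rw [abs_of_nonneg (by linarith : (0:ℝ) ≤ u ^ α - -((-v) ^ α))]
        have e1 : 0 ≤ u ^ α * (-v) ^ (1 - α) := by positivity
        have e2 : 0 ≤ (-v) ^ α * u ^ (1 - α) := by positivity
        nlinarith [hA, hB, e1, e2]
  refine ⟨α⁻¹, by positivity, fun u v => ?_⟩
  have hmain : α * |u - v| ≤ |(|u| ^ (α - 1) * u) - (|v| ^ (α - 1) * v)| *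
      (|u| ^ (1 - α) + |v| ^ (1 - α)) := by
    rcases le_total v u with h | h
    · rw [abs_of_nonneg (by linarith)]; exact key u v h
    · rw [abs_of_nonpos (by linarith), abs_sub_comm, add_comm]
      have := key v u h
      linarith
  calc |u - v| = α⁻¹ * (α * |u - v|) := by field_simp
    _ ≤ α⁻¹ * (|(|u| ^ (α - 1) * u) - (|v| ^ (α - 1) * v)| *
        (|u| ^ (1 - α) + |v| ^ (1 - α))) := by
        apply mul_le_mul_of_nonneg_left hmain (by positivity)
    _ = _ := by ring
end

section
/- For every α ∈ (0,∞) and all real numbers a, b, one has (|a|^{α-1}a - |b|^{α-1}b)·a ≥ (α/(α+1))·(|a|^{α+1} - |b|^{α+1}). -/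
/-!
Since `|a|^(α-1) a · a = |a|^(α+1)`, the claim amounts to bounding the cross term
`|b|^(α-1) b · a ≤ |b|^α |a|` by Young's inequality with exponents `α + 1` and `(α + 1)/α`:
`|a| |b|^α ≤ |a|^(α+1)/(α+1) + α/(α+1) · |b|^(α+1)`.
-/

open Real

lemma abs_rpow_sub_one_mul_self_mul_self {α : ℝ} (hα : α + 1 ≠ 0) (a : ℝ) :
    |a| ^ (α - 1) * a * a = |a| ^ (α + 1) := by
  rcases eq_or_ne a 0 with rfl | ha
  · simp [zero_rpow hα]
  · have hsq : a * a = |a| ^ (2 : ℝ) := by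
      rw [rpow_two, sq_abs, sq]
    rw [mul_assoc, hsq, ← rpow_add (abs_pos.mpr ha)]
    ring_nf

lemma abs_rpow_sub_one_mul_mul_le (α a b : ℝ) :
    |b| ^ (α - 1) * b * a ≤ |b| ^ α * |a| := by
  have hpow : |b| ^ (α - 1) * |b| ≤ |b| ^ α := by
    rcases eq_or_ne b 0 with rfl | hb
    · simpa using rpow_nonneg le_rfl α
    · rw [← rpow_add_one (abs_ne_zero.mpr hb), sub_add_cancel]
  calc |b| ^ (α - 1) * b * a ≤ |b| ^ (α - 1) * |b * a| := by
        rw [mul_assoc]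
        exact mul_le_mul_of_nonneg_left (le_abs_self _) (rpow_nonneg (abs_nonneg b) _)
    _ = |b| ^ (α - 1) * |b| * |a| := by rw [abs_mul, mul_assoc]
    _ ≤ |b| ^ α * |a| := mul_le_mul_of_nonneg_right hpow (abs_nonneg a)

lemma mul_rpow_le_young {α x y : ℝ} (hα : 0 < α) (hx : 0 ≤ x) (hy : 0 ≤ y) :
    x * y ^ α ≤ x ^ (α + 1) / (α + 1) + α / (α + 1) * y ^ (α + 1) := by
  have hconj : (α + 1).HolderConjugate ((α + 1) / α) := by
    rw [holderConjugate_iff_eq_conjExponent (by linarith)]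
    congr 1
    ring
  have hpow : (y ^ α) ^ ((α + 1) / α) = y ^ (α + 1) := by
    rw [← rpow_mul hy, mul_div_cancel₀ _ hα.ne']
  have hyoung := young_inequality_of_nonneg hx (rpow_nonneg hy α) hconj
  rw [hpow] at hyoung
  convert hyoung using 2
  field_simp

theorem signed_power_convexity (α : ℝ) (hα : 0 < α) (a b : ℝ) :
    ((|a| ^ (α - 1) * a) - (|b| ^ (α - 1) * b)) * a ≥
      (α / (α + 1)) * (|a| ^ (α + 1) - |b| ^ (α + 1)) := by
  have hα1 : α + 1 ≠ 0 := by positivity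
  have hcross : |b| ^ (α - 1) * b * a ≤
      |a| ^ (α + 1) / (α + 1) + α / (α + 1) * |b| ^ (α + 1) :=
    (abs_rpow_sub_one_mul_mul_le α a b).trans <| by
      rw [mul_comm]
      exact mul_rpow_le_young hα (abs_nonneg a) (abs_nonneg b)
  have hsplit : α / (α + 1) * (|a| ^ (α + 1) - |b| ^ (α + 1)) =
      |a| ^ (α + 1) - (|a| ^ (α + 1) / (α + 1) + α / (α + 1) * |b| ^ (α + 1)) := by
    field_simp
    ring
  rw [ge_iff_le, sub_mul, abs_rpow_sub_one_mul_self_mul_self hα1, hsplit]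
  linarith
end

section
/- For every α > 0 there is a constant c = c(α) such that for all v, w ∈ ℝ: ||w|^{(α-1)/2}w - |v|^{(α-1)/2}v|² ≤ c · 𝔟_α[v,w]. -/
open Real

private lemma young_key {t X Y : ℝ} (ht0 : 0 < t) (ht1 : t ≤ 1)
    (hX : 0 ≤ X) (hY : 0 ≤ Y) :
    X ^ (2 - t) * Y ^ t ≤ (1 - t) * X ^ 2 + t * (X * Y) := by
  rcases eq_or_lt_of_le hX with hX0 | hX0
  · rw [← hX0, Real.zero_rpow (by linarith : (2:ℝ) - t ≠ 0)]
    nlinarith [Real.rpow_nonneg hY t]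
  · have h := Real.geom_mean_le_arith_mean2_weighted
      (by linarith : (0:ℝ) ≤ 1 - t) ht0.le
      (by positivity : (0:ℝ) ≤ X ^ 2) (mul_nonneg hX hY) (by ring)
    have heq : (X ^ 2) ^ (1 - t) * (X * Y) ^ t = X ^ (2 - t) * Y ^ t := by
      rw [← Real.rpow_two, ← Real.rpow_mul hX, Real.mul_rpow hX hY,
        show ((2:ℝ)) * (1 - t) = 2 - 2 * t by ring, ← mul_assoc,
        ← Real.rpow_add hX0, show (2:ℝ) - 2 * t + t = 2 - t by ring]
    linarith [heq ▸ h]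

private lemma bracket_ge {t X Y : ℝ} (ht0 : 0 < t) (ht1 : t ≤ 1)
    (hX : 0 ≤ X) (hY : 0 ≤ Y) :
    t / 2 * (X - Y) ^ 2 ≤ t / 2 * Y ^ 2 + (1 - t / 2) * X ^ 2 - X ^ (2 - t) * Y ^ t := by
  nlinarith [young_key ht0 ht1 hX hY]

private lemma bracket_ge' {t X Y : ℝ} (ht0 : 0 < t) (ht2 : t < 2)
    (hX : 0 ≤ X) (hY : 0 ≤ Y) :
    min t (2 - t) / 2 * (X - Y) ^ 2 ≤
      t / 2 * Y ^ 2 + (1 - t / 2) * X ^ 2 - X ^ (2 - t) * Y ^ t := by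
  rcases le_or_gt t 1 with ht1 | ht1
  · have h := bracket_ge ht0 ht1 hX hY
    have : min t (2 - t) ≤ t := min_le_left _ _
    nlinarith [sq_nonneg (X - Y)]
  · have h := bracket_ge (t := 2 - t) (X := Y) (Y := X)
      (by linarith) (by linarith) hY hX
    rw [show (2:ℝ) - (2 - t) = t by ring] at h
    have : min t (2 - t) ≤ 2 - t := min_le_right _ _
    nlinarith [sq_nonneg (X - Y)]

set_option maxHeartbeats 1000000 in
theorem half_power_diff_sq_le_bregman (α : ℝ) (hα : 0 < α) :
    ∃ c : ℝ, 0 < c ∧ ∀ v w : ℝ,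
      |(|w| ^ ((α - 1) / 2) * w) - (|v| ^ ((α - 1) / 2) * v)| ^ 2 ≤
        c * ((1 / (α + 1)) * (|w| ^ (α + 1) - |v| ^ (α + 1)) +
          (|v| ^ (α - 1) * v) * (v - w)) := by
  have hα1 : (0:ℝ) < α + 1 := by linarith
  set t : ℝ := 2 / (α + 1) with ht_def
  have ht0 : 0 < t := by positivity
  have ht2 : t < 2 := by
    rw [ht_def, div_lt_iff₀ hα1]; nlinarith
  refine ⟨2 * (α + 1) ^ 2 / α, by positivity, fun v w => ?_⟩
  set c : ℝ := 2 * (α + 1) ^ 2 / α with hc_def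
  have hc0 : 0 < c := by positivity
  have hct : 4 ≤ c * t := by
    rw [hc_def, ht_def]; rw [div_mul_div_comm, le_div_iff₀ (by positivity)]
    nlinarith
  have hne : α + 1 ≠ 0 := hα1.ne'
  have hct2 : 4 ≤ c * (2 - t) := by
    have h2t : 2 - t = 2 * α / (α + 1) := by
      rw [ht_def]; field_simp; ring
    rw [hc_def, h2t, div_mul_div_comm, le_div_iff₀ (by positivity)]
    nlinarith [mul_pos hα hα, mul_pos (mul_pos hα hα) hα]
  set X : ℝ := |v| ^ ((α + 1) / 2) with hX_def
  set Y : ℝ := |w| ^ ((α + 1) / 2) with hY_def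
  have hX : 0 ≤ X := Real.rpow_nonneg (abs_nonneg v) _
  have hY : 0 ≤ Y := Real.rpow_nonneg (abs_nonneg w) _
  -- |a| = X and |b| = Y for a = |v|^((α-1)/2) v, b = |w|^((α-1)/2) w
  have habs : ∀ u : ℝ, |(|u| ^ ((α - 1) / 2) * u)| = |u| ^ ((α + 1) / 2) := by
    intro u
    rw [abs_mul, abs_of_nonneg (Real.rpow_nonneg (abs_nonneg u) _),
      show (α + 1) / 2 = (α - 1) / 2 + 1 by ring,
      Real.rpow_add' (abs_nonneg u) (by intro h; nlinarith), Real.rpow_one]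
  have hav : |(|v| ^ ((α - 1) / 2) * v)| = X := habs v
  have haw : |(|w| ^ ((α - 1) / 2) * w)| = Y := habs w
  have hasq : (|v| ^ ((α - 1) / 2) * v) ^ 2 = X ^ 2 := by rw [← sq_abs, hav]
  have hbsq : (|w| ^ ((α - 1) / 2) * w) ^ 2 = Y ^ 2 := by rw [← sq_abs, haw]
  -- |v|^(α+1) = X^2, |w|^(α+1) = Y^2
  have hpow : ∀ u : ℝ, |u| ^ (α + 1) = (|u| ^ ((α + 1) / 2)) ^ 2 := by
    intro u
    rw [← Real.rpow_two, ← Real.rpow_mul (abs_nonneg u)]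
    norm_num
  have hvpow : |v| ^ (α + 1) = X ^ 2 := hpow v
  have hwpow : |w| ^ (α + 1) = Y ^ 2 := hpow w
  -- |v|^(α-1) * v * v = X^2
  have hvv : |v| ^ (α - 1) * v * v = X ^ 2 := by
    have h2 : v * v = |v| ^ (2:ℝ) := by rw [Real.rpow_two, sq, abs_mul_abs_self]
    rw [mul_assoc, h2, ← Real.rpow_add' (abs_nonneg v)
      (by intro h; linarith : (α - 1) + 2 ≠ 0),
      show α - 1 + 2 = α + 1 by ring, hvpow]
  -- goal abs square to plain square
  rw [sq_abs]
  rcases le_or_gt (v * w) 0 with hvw | hvw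
  · -- mixed signs: cross terms help
    have hcross : |v| ^ (α - 1) * v * w ≤ 0 := by
      rw [mul_assoc]
      exact mul_nonpos_of_nonneg_of_nonpos (Real.rpow_nonneg (abs_nonneg v) _) hvw
    have habmul : -((|v| ^ ((α - 1) / 2) * v) * (|w| ^ ((α - 1) / 2) * w)) ≤ X * Y := by
      calc -((|v| ^ ((α - 1) / 2) * v) * (|w| ^ ((α - 1) / 2) * w))
          ≤ |(|v| ^ ((α - 1) / 2) * v) * (|w| ^ ((α - 1) / 2) * w)| := neg_le_abs _
        _ = X * Y := by rw [abs_mul, hav, haw]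
    have h1t : 1 / (α + 1) = t / 2 := by rw [ht_def]; ring
    rw [h1t, hvpow, hwpow]
    nlinarith [sq_nonneg (X - Y), sq_nonneg (X + Y), hX, hY,
      mul_nonneg hX hY, sq_nonneg X, sq_nonneg Y,
      mul_le_mul_of_nonneg_left hcross hc0.le]
  · -- same signs
    have hvw' : v * w = |v| * |w| := by
      rw [← abs_mul]; exact (abs_of_pos hvw).symm
    -- X^(2-t) = |v|^α, Y^t = |w|
    have hXt : X ^ (2 - t) = |v| ^ α := by
      rw [hX_def, ← Real.rpow_mul (abs_nonneg v)]
      congr 1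
      rw [ht_def]
      field_simp
      ring
    have hYt : Y ^ t = |w| := by
      rw [hY_def, ← Real.rpow_mul (abs_nonneg w)]
      rw [show (α + 1) / 2 * t = 1 by rw [ht_def]; field_simp]
      exact Real.rpow_one _
    have hva : |v| ^ (α - 1) * |v| = |v| ^ α := by
      have h := Real.rpow_add' (abs_nonneg v)
        (by intro h; linarith : (α - 1) + 1 ≠ 0)
      rw [Real.rpow_one, show α - 1 + 1 = α by ring] at h
      exact h.symm
    have hcross : |v| ^ (α - 1) * v * w = X ^ (2 - t) * Y ^ t := by
      rw [mul_assoc, hvw', ← mul_assoc, hva, hXt, hYt]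
    have hab : (|v| ^ ((α - 1) / 2) * v) * (|w| ^ ((α - 1) / 2) * w) = X * Y := by
      have hnn : 0 ≤ (|v| ^ ((α - 1) / 2) * v) * (|w| ^ ((α - 1) / 2) * w) := by
        have : (|v| ^ ((α - 1) / 2) * v) * (|w| ^ ((α - 1) / 2) * w)
            = (|v| ^ ((α - 1) / 2) * |w| ^ ((α - 1) / 2)) * (v * w) := by ring
        rw [this]
        exact mul_nonneg (mul_nonneg (Real.rpow_nonneg (abs_nonneg v) _)
          (Real.rpow_nonneg (abs_nonneg w) _)) hvw.le
      rw [← abs_of_nonneg hnn, abs_mul, hav, haw]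
    have h1t : 1 / (α + 1) = t / 2 := by rw [ht_def]; ring
    rw [h1t, hvpow, hwpow]
    have key := bracket_ge' (X := X) (Y := Y) ht0 ht2 hX hY
    have hmin : 4 ≤ c * min t (2 - t) := by
      rcases min_cases t (2 - t) with ⟨h, _⟩ | ⟨h, _⟩ <;> rw [h]
      · exact hct
      · exact hct2
    nlinarith [sq_nonneg (X - Y), mul_le_mul_of_nonneg_left key hc0.le,
      mul_nonneg (mul_nonneg hc0.le (sq_nonneg (X - Y)))
        (sub_nonneg.mpr (min_le_left t (2 - t))) ]
end

section
/- For every α ∈ (0,1) there is a constant c = c(α) such that for all v, w ∈ ℝ: (1/c)·(|w| + |v|)^{α-1}·|w - v|² ≤ 𝔟_α[v,w] ≤ c·(|w| + |v|)^{α-1}·|w - v|². -/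
/-!
Write `Φ y = |y| ^ (α + 1) / (α + 1)`, so that `Φ' = φ` with `φ x = |x| ^ (α - 1) * x`, and
`𝔟_α[v,w] = Φ w - Φ v - φ v * (w - v)` is the Bregman divergence of the convex function `Φ`.
The heart of the matter is the two-sided estimate
`α N(a,b) ≤ (φ a - φ b) * (a - b) ≤ 2 N(a,b)`, `N(a,b) = (|a| + |b|) ^ (α - 1) * (a - b) ^ 2`,
checked by hand for arguments of equal and of opposite sign.
For the lower bound, `|t| + |v| ≤ 2 (|v| + |w|)` for `t` between `v` and `w`, so
`t ↦ 𝔟_α[v,t] - K (t - v) ^ 2 / 2` with `K = α (2 (|v| + |w|)) ^ (α - 1)` decreases up to `v`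
and increases after it. For the upper bound,
`𝔟_α[v,w] ≤ 𝔟_α[v,w] + 𝔟_α[w,v] = (φ w - φ v) * (w - v)`.
-/

open Real Set

noncomputable def signedRpow (α x : ℝ) : ℝ := |x| ^ (α - 1) * x

def bregman (f f' : ℝ → ℝ) (v w : ℝ) : ℝ := f w - f v - f' v * (w - v)

lemma bregman_add_bregman_swap (f f' : ℝ → ℝ) (v w : ℝ) :
    bregman f f' v w + bregman f f' w v = (f' w - f' v) * (w - v) := by
  unfold bregman; ring

lemma le_bregman_of_forall_mem_uIcc {f f' : ℝ → ℝ} {K v w : ℝ}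
    (hf : ∀ x, HasDerivAt f (f' x) x)
    (hK : ∀ t ∈ uIcc v w, K * (t - v) ^ 2 ≤ (f' t - f' v) * (t - v)) :
    K / 2 * (w - v) ^ 2 ≤ bregman f f' v w := by
  set g : ℝ → ℝ := fun t ↦ bregman f f' v t - K / 2 * (t - v) ^ 2
  set g' : ℝ → ℝ := fun t ↦ f' t - f' v - K * (t - v)
  have hg : ∀ t, HasDerivAt g (g' t) t := fun t ↦ by
    have h := (((hf t).sub_const (f v)).sub (((hasDerivAt_id' t).sub_const v).const_mul (f' v))).sub
      ((((hasDerivAt_id' t).sub_const v).pow 2).const_mul (K / 2))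
    exact h.congr_deriv (by simp only [g']; ring)
  have hg_cont : Continuous g := continuous_iff_continuousAt.2 fun t ↦ (hg t).continuousAt
  have hg'_mul : ∀ t ∈ uIcc v w, 0 ≤ g' t * (t - v) := fun t ht ↦ by
    have := hK t ht; simp only [g']; nlinarith
  suffices g v ≤ g w by simpa [g, bregman] using this
  rcases le_total v w with hvw | hwv
  · refine monotoneOn_of_hasDerivWithinAt_nonneg (convex_Icc v w) hg_cont.continuousOn
      (fun t _ ↦ (hg t).hasDerivWithinAt) (fun t ht ↦ ?_) (left_mem_Icc.2 hvw)
      (right_mem_Icc.2 hvw) hvw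
    rw [interior_Icc] at ht
    exact nonneg_of_mul_nonneg_left (hg'_mul t (Icc_subset_uIcc (Ioo_subset_Icc_self ht)))
      (sub_pos.2 ht.1)
  · refine antitoneOn_of_hasDerivWithinAt_nonpos (convex_Icc w v) hg_cont.continuousOn
      (fun t _ ↦ (hg t).hasDerivWithinAt) (fun t ht ↦ ?_) (left_mem_Icc.2 hwv)
      (right_mem_Icc.2 hwv) hwv
    rw [interior_Icc] at ht
    have := hg'_mul t (Icc_subset_uIcc' (Ioo_subset_Icc_self ht))
    nlinarith [ht.2]

section

variable {α a b x : ℝ}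

lemma rpow_sub_one_mul_self (hx : x ≠ 0) (α : ℝ) : x ^ (α - 1) * x = x ^ α := by
  rw [← rpow_add_one hx, sub_add_cancel]

lemma mul_rpow_sub_one_mul_sub_le_rpow_sub_rpow (hα0 : 0 ≤ α) (hα1 : α ≤ 1) (ha : 0 < a)
    (hb : 0 ≤ b) : α * a ^ (α - 1) * (a - b) ≤ a ^ α - b ^ α := by
  have amgm : b ^ α * a ^ (1 - α) ≤ α * b + (1 - α) * a :=
    geom_mean_le_arith_mean2_weighted hα0 (by linarith) hb ha.le (by ring)
  have hinv : a ^ (1 - α) * a ^ (α - 1) = 1 := by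
    rw [← rpow_add ha]; norm_num
  have := mul_le_mul_of_nonneg_right amgm (rpow_pos_of_pos ha (α - 1)).le
  rw [mul_assoc, hinv, mul_one] at this
  nlinarith [rpow_sub_one_mul_self ha.ne' α]

lemma rpow_sub_rpow_le_rpow_sub_one_mul_sub (hα1 : α ≤ 1) (hb : 0 ≤ b) (hba : b ≤ a) :
    a ^ α - b ^ α ≤ a ^ (α - 1) * (a - b) := by
  rcases hb.eq_or_lt with rfl | hb
  · rcases hba.eq_or_lt with rfl | ha
    · simp
    · rw [sub_zero, rpow_sub_one_mul_self ha.ne']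
      linarith [rpow_nonneg le_rfl α]
  · have hab : a ^ (α - 1) ≤ b ^ (α - 1) := rpow_le_rpow_of_nonpos hb hba (by linarith)
    rw [mul_sub, rpow_sub_one_mul_self (hb.trans_le hba).ne', ← rpow_sub_one_mul_self hb.ne']
    nlinarith

lemma rpow_sub_rpow_mul_sub_bounds (hα0 : 0 ≤ α) (hα1 : α ≤ 1) (hb : 0 ≤ b) (hba : b ≤ a) :
    α * ((a + b) ^ (α - 1) * (a - b) ^ 2) ≤ (a ^ α - b ^ α) * (a - b) ∧
      (a ^ α - b ^ α) * (a - b) ≤ 2 * ((a + b) ^ (α - 1) * (a - b) ^ 2) := by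
  rcases (hb.trans hba).eq_or_lt with rfl | ha
  · simp [le_antisymm hba hb]
  have hab : 0 ≤ a - b := sub_nonneg.2 hba
  have hsum_le : (a + b) ^ (α - 1) ≤ a ^ (α - 1) :=
    rpow_le_rpow_of_nonpos ha (by linarith) (by linarith)
  have hle_sum : a ^ (α - 1) ≤ 2 * (a + b) ^ (α - 1) := calc
    a ^ (α - 1) ≤ 2 ^ α * a ^ (α - 1) :=
      le_mul_of_one_le_left (rpow_nonneg ha.le _) (one_le_rpow one_le_two hα0)
    _ = 2 * (2 * a) ^ (α - 1) := by
      rw [mul_rpow zero_le_two ha.le, ← mul_assoc, mul_comm 2, rpow_sub_one_mul_self two_ne_zero]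
    _ ≤ 2 * (a + b) ^ (α - 1) := by
      gcongr 2 * ?_
      exact rpow_le_rpow_of_nonpos (by linarith) (by linarith) (by linarith)
  have lower := mul_rpow_sub_one_mul_sub_le_rpow_sub_rpow hα0 hα1 ha hb
  have upper := rpow_sub_rpow_le_rpow_sub_one_mul_sub hα1 hb hba
  constructor
  · calc α * ((a + b) ^ (α - 1) * (a - b) ^ 2) ≤ α * a ^ (α - 1) * (a - b) * (a - b) := by
          rw [mul_assoc, mul_assoc, ← sq]; gcongr
      _ ≤ (a ^ α - b ^ α) * (a - b) := by gcongr
  · calc (a ^ α - b ^ α) * (a - b) ≤ a ^ (α - 1) * (a - b) * (a - b) := by gcongr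
      _ ≤ 2 * ((a + b) ^ (α - 1) * (a - b) ^ 2) := by
          rw [mul_assoc, ← sq, ← mul_assoc]; gcongr

lemma rpow_add_rpow_bounds (hα0 : 0 ≤ α) (hα1 : α ≤ 1) (ha : 0 ≤ a) (hb : 0 ≤ b) :
    α * (a + b) ^ α ≤ a ^ α + b ^ α ∧ a ^ α + b ^ α ≤ 2 * (a + b) ^ α := by
  have ha' : a ^ α ≤ (a + b) ^ α := rpow_le_rpow ha (by linarith) hα0
  have hb' : b ^ α ≤ (a + b) ^ α := rpow_le_rpow hb (by linarith) hα0
  refine ⟨?_, by linarith⟩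
  calc α * (a + b) ^ α ≤ (a + b) ^ α :=
        mul_le_of_le_one_left (rpow_nonneg (by linarith) _) hα1
    _ ≤ a ^ α + b ^ α := rpow_add_le_add_rpow ha hb hα0 hα1

lemma signedRpow_neg (α x : ℝ) : signedRpow α (-x) = -signedRpow α x := by
  simp [signedRpow]

lemma signedRpow_of_nonneg (hα : α ≠ 0) (hx : 0 ≤ x) : signedRpow α x = x ^ α := by
  rcases hx.eq_or_lt with rfl | hx
  · simp [signedRpow, zero_rpow hα]
  · rw [signedRpow, abs_of_pos hx, rpow_sub_one_mul_self hx.ne']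

lemma signedRpow_sub_mul_sub_bounds (hα0 : 0 < α) (hα1 : α ≤ 1) (a b : ℝ) :
    α * ((|a| + |b|) ^ (α - 1) * (a - b) ^ 2) ≤
        (signedRpow α a - signedRpow α b) * (a - b) ∧
      (signedRpow α a - signedRpow α b) * (a - b) ≤ 2 * ((|a| + |b|) ^ (α - 1) * (a - b) ^ 2) := by
  wlog hba : b ≤ a generalizing a b
  · obtain ⟨h1, h2⟩ := this b a (le_of_not_ge hba)
    rw [add_comm |b|] at h1 h2
    constructor <;> linarith
  wlog ha : 0 ≤ a generalizing a b
  · obtain ⟨h1, h2⟩ := this (-b) (-a) (neg_le_neg hba) (by linarith)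
    rw [abs_neg, abs_neg, add_comm |b|, signedRpow_neg, signedRpow_neg] at h1 h2
    constructor <;> linarith
  rcases le_total 0 b with hb | hb
  · rw [abs_of_nonneg ha, abs_of_nonneg hb, signedRpow_of_nonneg hα0.ne' ha,
      signedRpow_of_nonneg hα0.ne' hb]
    exact rpow_sub_rpow_mul_sub_bounds hα0.le hα1 hb hba
  · obtain ⟨c, hc, rfl⟩ : ∃ c, 0 ≤ c ∧ b = -c := ⟨-b, by linarith, by ring⟩
    rcases (add_nonneg ha hc).eq_or_lt with hac | hac
    · obtain ⟨rfl, rfl⟩ : a = 0 ∧ c = 0 := ⟨by linarith, by linarith⟩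
      simp
    have hN : (|a| + |-c|) ^ (α - 1) * (a - -c) ^ 2 = (a + c) ^ α * (a + c) := by
      rw [abs_of_nonneg ha, abs_neg, abs_of_nonneg hc, sub_neg_eq_add, sq, ← mul_assoc,
        rpow_sub_one_mul_self hac.ne']
    rw [hN, signedRpow_neg, signedRpow_of_nonneg hα0.ne' ha, signedRpow_of_nonneg hα0.ne' hc,
      sub_neg_eq_add, sub_neg_eq_add, ← mul_assoc, ← mul_assoc]
    obtain ⟨lower, upper⟩ := rpow_add_rpow_bounds hα0.le hα1 ha hc
    exact ⟨by gcongr, by gcongr⟩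

end

section

variable {α : ℝ}

lemma hasDerivAt_abs_rpow_add_one_div (hα : 0 < α) (x : ℝ) :
    HasDerivAt (fun y ↦ |y| ^ (α + 1) / (α + 1)) (signedRpow α x) x := by
  refine ((hasDerivAt_abs_rpow x (by linarith : 1 < α + 1)).div_const (α + 1)).congr_deriv ?_
  rw [signedRpow, show α + 1 - 2 = α - 1 by ring]
  field_simp

lemma le_bregman_abs_rpow (hα0 : 0 < α) (hα1 : α ≤ 1) (v w : ℝ) :
    α / 4 * ((|w| + |v|) ^ (α - 1) * (w - v) ^ 2) ≤
      bregman (fun y ↦ |y| ^ (α + 1) / (α + 1)) (signedRpow α) v w := by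
  set M := |w| + |v|
  have hpt : ∀ t ∈ uIcc v w,
      α * (2 * M) ^ (α - 1) * (t - v) ^ 2 ≤ (signedRpow α t - signedRpow α v) * (t - v) := by
    intro t ht
    rcases eq_or_ne t v with rfl | htv
    · simp
    have hpos : 0 < |t| + |v| := by
      have := abs_pos.2 (sub_ne_zero.2 htv)
      linarith [abs_sub t v]
    have hle : |t| + |v| ≤ 2 * M := by
      have : |t| ≤ |v| + |w| := by
        rcases mem_uIcc.1 ht with ⟨h1, h2⟩ | ⟨h1, h2⟩ <;> rw [abs_le] <;> constructor <;>
          linarith [neg_abs_le v, le_abs_self v, neg_abs_le w, le_abs_self w]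
      linarith [abs_nonneg w]
    calc α * (2 * M) ^ (α - 1) * (t - v) ^ 2 ≤ α * ((|t| + |v|) ^ (α - 1) * (t - v) ^ 2) := by
          rw [mul_assoc]
          gcongr α * (?_ * _)
          exact rpow_le_rpow_of_nonpos hpos hle (by linarith)
      _ ≤ _ := (signedRpow_sub_mul_sub_bounds hα0 hα1 t v).1
  have hhalf : M ^ (α - 1) / 2 ≤ (2 * M) ^ (α - 1) := by
    rw [mul_rpow zero_le_two (by positivity), div_le_iff₀ zero_lt_two, mul_comm, ← mul_assoc,
      mul_comm 2, rpow_sub_one_mul_self two_ne_zero]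
    exact le_mul_of_one_le_left (by positivity) (one_le_rpow one_le_two hα0.le)
  calc α / 4 * (M ^ (α - 1) * (w - v) ^ 2) = α * (M ^ (α - 1) / 2) / 2 * (w - v) ^ 2 := by ring
    _ ≤ α * (2 * M) ^ (α - 1) / 2 * (w - v) ^ 2 := by gcongr
    _ ≤ _ := le_bregman_of_forall_mem_uIcc (hasDerivAt_abs_rpow_add_one_div hα0) hpt

lemma bregman_abs_rpow_le (hα0 : 0 < α) (hα1 : α ≤ 1) (v w : ℝ) :
    bregman (fun y ↦ |y| ^ (α + 1) / (α + 1)) (signedRpow α) v w ≤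
      2 * ((|w| + |v|) ^ (α - 1) * (w - v) ^ 2) := by
  have hswap : 0 ≤ bregman (fun y ↦ |y| ^ (α + 1) / (α + 1)) (signedRpow α) w v := by
    have := le_bregman_of_forall_mem_uIcc (K := 0) (v := w) (w := v)
      (hasDerivAt_abs_rpow_add_one_div hα0) fun t _ ↦ by
        rw [zero_mul]
        exact (mul_nonneg hα0.le (by positivity)).trans
          (signedRpow_sub_mul_sub_bounds hα0 hα1 t w).1
    simpa using this
  linarith [bregman_add_bregman_swap (fun y ↦ |y| ^ (α + 1) / (α + 1)) (signedRpow α) v w,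
    (signedRpow_sub_mul_sub_bounds hα0 hα1 w v).2]

end

theorem bregman_two_sided_bound (α : ℝ) (hα0 : 0 < α) (hα1 : α < 1) :
    ∃ c : ℝ, 0 < c ∧ ∀ v w : ℝ,
      (1 / c) * (|w| + |v|) ^ (α - 1) * |w - v| ^ 2 ≤
        (1 / (α + 1)) * (|w| ^ (α + 1) - |v| ^ (α + 1)) +
          (|v| ^ (α - 1) * v) * (v - w) ∧
      (1 / (α + 1)) * (|w| ^ (α + 1) - |v| ^ (α + 1)) +
          (|v| ^ (α - 1) * v) * (v - w) ≤
        c * (|w| + |v|) ^ (α - 1) * |w - v| ^ 2 := by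
  refine ⟨4 / α, by positivity, fun v w ↦ ?_⟩
  have hB : (1 / (α + 1)) * (|w| ^ (α + 1) - |v| ^ (α + 1)) + (|v| ^ (α - 1) * v) * (v - w) =
      bregman (fun y ↦ |y| ^ (α + 1) / (α + 1)) (signedRpow α) v w := by
    simp only [bregman, signedRpow]
    ring
  rw [hB, sq_abs, one_div_div, mul_assoc, mul_assoc]
  refine ⟨le_bregman_abs_rpow hα0 hα1.le v w, (bregman_abs_rpow_le hα0 hα1.le v w).trans ?_⟩
  gcongr
  rw [le_div_iff₀ hα0]
  linarith
end

section
/- For every α ∈ (0,1) there is a constant c = c(α) such that for all v, w ∈ ℝ: ||v|^{α-1}v - |w|^{α-1}w|^{(α+1)/α} ≤ c · 𝔟_α[v,w]. -/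
/-!
With `q = (α + 1) / α ≥ 2`, the maps `v ↦ |v|^(α-1) v` and `V ↦ |V|^(q-2) V` are the mutually
inverse gradients of the conjugate convex functions `|v|^(α+1) / (α+1)` and `|V|^q / q`, so
`𝔟_α[v, w]` equals the Bregman divergence of `|·|^q / q` between `V = |v|^(α-1) v` and
`W = |w|^(α-1) w`. For `q ≥ 2` this divergence dominates `|V - W|^q / (q 2^(q-1))`: by convexity
it is at least `(|V|^q + |W|^q - 2 |(V + W)/2|^q) / q`, which Clarkson's inequality bounds below.
-/

open Real

noncomputable def signedPow (p x : ℝ) : ℝ := |x| ^ (p - 1) * x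

lemma abs_signedPow {p : ℝ} (hp : p ≠ 0) (x : ℝ) : |signedPow p x| = |x| ^ p := by
  rcases eq_or_ne x 0 with rfl | hx
  · simp [signedPow, zero_rpow hp]
  · rw [signedPow, abs_mul, abs_of_nonneg (rpow_nonneg (abs_nonneg x) _),
      ← rpow_add_one (abs_ne_zero.2 hx), sub_add_cancel]

lemma signedPow_mul_self {p : ℝ} (hp : p + 1 ≠ 0) (x : ℝ) :
    signedPow p x * x = |x| ^ (p + 1) := by
  rcases eq_or_ne x 0 with rfl | hx
  · simp [signedPow, zero_rpow hp]
  · have hx' : |x| ≠ 0 := abs_ne_zero.2 hx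
    rw [signedPow, mul_assoc, ← abs_mul_abs_self, ← mul_assoc, ← rpow_add_one hx',
      ← rpow_add_one hx']
    ring_nf

lemma signedPow_inv_signedPow {p : ℝ} (hp : p ≠ 0) (x : ℝ) :
    signedPow p⁻¹ (signedPow p x) = x := by
  rcases eq_or_ne x 0 with rfl | hx
  · simp [signedPow]
  · rw [signedPow, abs_signedPow hp, ← rpow_mul (abs_nonneg x), signedPow, ← mul_assoc,
      ← rpow_add (abs_pos.2 hx), mul_sub, mul_inv_cancel₀ hp, mul_one, sub_add_sub_cancel',
      sub_self, rpow_zero, one_mul]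

noncomputable def powBregman (q x y : ℝ) : ℝ :=
  |x| ^ q / q - |y| ^ q / q - signedPow (q - 1) y * (x - y)

lemma powBregman_nonneg {q : ℝ} (hq : 1 < q) (x y : ℝ) : 0 ≤ powBregman q x y := by
  have hq0 : q ≠ 0 := by positivity
  have hyy : signedPow (q - 1) y * y = |y| ^ q := by
    rw [signedPow_mul_self (by simpa using hq0), sub_add_cancel]
  have hyx : signedPow (q - 1) y * x ≤ |y| ^ (q - 1) * |x| := by
    calc signedPow (q - 1) y * x ≤ |signedPow (q - 1) y * x| := le_abs_self _
      _ = |y| ^ (q - 1) * |x| := by rw [abs_mul, abs_signedPow (by linarith)]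
  have young := young_inequality_of_nonneg (rpow_nonneg (abs_nonneg y) (q - 1)) (abs_nonneg x)
    (HolderConjugate.conjExponent hq).symm
  rw [← rpow_mul (abs_nonneg y), conjExponent, mul_div_cancel₀ _ (by linarith)] at young
  have hdiv : |y| ^ q / (q / (q - 1)) = |y| ^ q - |y| ^ q / q := by
    field_simp
  rw [powBregman, mul_sub, hyy]
  linarith

lemma Real.rpow_add_le_mul_rpow_add_rpow {p a b : ℝ} (ha : 0 ≤ a) (hb : 0 ≤ b) (hp : 1 ≤ p) :
    (a + b) ^ p ≤ 2 ^ (p - 1) * (a ^ p + b ^ p) := by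
  lift a to NNReal using ha
  lift b to NNReal using hb
  exact_mod_cast NNReal.rpow_add_le_mul_rpow_add_rpow a b hp

lemma abs_rpow_eq_sq_rpow (x q : ℝ) : |x| ^ q = (x ^ 2) ^ (q / 2) := by
  rw [← sq_abs, ← rpow_natCast, ← rpow_mul (abs_nonneg x)]
  ring_nf

/-- Clarkson's inequality on the real line. -/
lemma abs_add_rpow_add_abs_sub_rpow_le {q : ℝ} (hq : 2 ≤ q) (x y : ℝ) :
    |x + y| ^ q + |x - y| ^ q ≤ 2 ^ (q - 1) * (|x| ^ q + |y| ^ q) := by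
  have hq2 : 1 ≤ q / 2 := by linarith
  calc |x + y| ^ q + |x - y| ^ q
      = ((x + y) ^ 2) ^ (q / 2) + ((x - y) ^ 2) ^ (q / 2) := by
        rw [abs_rpow_eq_sq_rpow, abs_rpow_eq_sq_rpow]
    _ ≤ ((x + y) ^ 2 + (x - y) ^ 2) ^ (q / 2) :=
        add_rpow_le_rpow_add (by positivity) (by positivity) hq2
    _ = 2 ^ (q / 2) * (x ^ 2 + y ^ 2) ^ (q / 2) := by
        rw [← mul_rpow zero_le_two (by positivity)]
        ring_nf
    _ ≤ 2 ^ (q / 2) * (2 ^ (q / 2 - 1) * ((x ^ 2) ^ (q / 2) + (y ^ 2) ^ (q / 2))) := by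
        gcongr
        exact rpow_add_le_mul_rpow_add_rpow (by positivity) (by positivity) hq2
    _ = 2 ^ (q - 1) * (|x| ^ q + |y| ^ q) := by
        rw [abs_rpow_eq_sq_rpow x, abs_rpow_eq_sq_rpow y, ← mul_assoc,
          ← rpow_add zero_lt_two]
        ring_nf

lemma abs_sub_rpow_le_powBregman {q : ℝ} (hq : 2 ≤ q) (x y : ℝ) :
    |x - y| ^ q ≤ q * 2 ^ (q - 1) * powBregman q x y := by
  obtain ⟨m, rfl⟩ : ∃ m, x = 2 * m - y := ⟨(x + y) / 2, by ring⟩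
  have hq0 : 0 < q := by linarith
  have hsum : |2 * m - y + y| ^ q = 2 * 2 ^ (q - 1) * |m| ^ q := by
    rw [← rpow_one_add' zero_le_two (by linarith), add_sub_cancel, sub_add_cancel, abs_mul,
      abs_two, mul_rpow zero_le_two (abs_nonneg m)]
  have hsplit : q * powBregman q (2 * m - y) y
      = |2 * m - y| ^ q + |y| ^ q - 2 * |m| ^ q + 2 * q * powBregman q m y := by
    simp only [powBregman]
    field_simp
    ring
  have hmid := powBregman_nonneg (by linarith : 1 < q) m y
  have hclarkson := abs_add_rpow_add_abs_sub_rpow_le hq (2 * m - y) y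
  calc |2 * m - y - y| ^ q ≤ 2 ^ (q - 1) * (|2 * m - y| ^ q + |y| ^ q - 2 * |m| ^ q) := by
        linarith
    _ ≤ 2 ^ (q - 1) * (q * powBregman q (2 * m - y) y) := by
        gcongr
        nlinarith
    _ = q * 2 ^ (q - 1) * powBregman q (2 * m - y) y := by ring

/-- Legendre duality: `𝔟_α[v, w]` is the Bregman divergence of the conjugate function
`|·|^q / q`, `q = (α + 1) / α`, taken at the images of `v` and `w` under its gradient. -/
lemma powBregman_signedPow {α : ℝ} (hα : α ≠ 0) (hα' : α + 1 ≠ 0) (v w : ℝ) :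
    powBregman ((α + 1) / α) (signedPow α v) (signedPow α w) =
      1 / (α + 1) * (|w| ^ (α + 1) - |v| ^ (α + 1)) + signedPow α v * (v - w) := by
  have hq : (α + 1) / α - 1 = α⁻¹ := by field_simp; ring
  have habs (u : ℝ) : |signedPow α u| ^ ((α + 1) / α) = |u| ^ (α + 1) := by
    rw [abs_signedPow hα, ← rpow_mul (abs_nonneg u), mul_div_cancel₀ _ hα]
  rw [powBregman, habs, habs, hq, signedPow_inv_signedPow hα, ← signedPow_mul_self hα' v,
    ← signedPow_mul_self hα' w]
  field_simp
  ring

theorem signed_power_diff_pow_le_bregman (α : ℝ) (hα0 : 0 < α) (hα1 : α < 1) :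
    ∃ c : ℝ, 0 < c ∧ ∀ v w : ℝ,
      |(|v| ^ (α - 1) * v) - (|w| ^ (α - 1) * w)| ^ ((α + 1) / α) ≤
        c * ((1 / (α + 1)) * (|w| ^ (α + 1) - |v| ^ (α + 1)) +
          (|v| ^ (α - 1) * v) * (v - w)) := by
  set q := (α + 1) / α
  have hq : 2 ≤ q := by rw [le_div_iff₀ hα0]; linarith
  refine ⟨q * 2 ^ (q - 1), by positivity, fun v w => ?_⟩
  have h := abs_sub_rpow_le_powBregman hq (signedPow α v) (signedPow α w)
  rwa [powBregman_signedPow hα0.ne' (by linarith)] at h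
end

section
/- Fix α ∈ (0,1) and ε ∈ (0,1), and let B_ε(u) := α∫₀^u (|s| + ε)^{α-1} ds. Then there is c = c(α) such that for all a, b ∈ ℝ: (B_ε(b) - B_ε(a))(b - a) ≥ c·(|a| + |b| + 1)^{α-1}·(b - a)². -/
theorem regularized_primitive_monotonicity (α : ℝ) (hα0 : 0 < α) (hα1 : α < 1) :
    ∃ c : ℝ, 0 < c ∧ ∀ ε : ℝ, 0 < ε → ε < 1 → ∀ a b : ℝ,
      c * (|a| + |b| + 1) ^ (α - 1) * (b - a) ^ 2 ≤
        ((α * ∫ s in (0:ℝ)..b, (|s| + ε) ^ (α - 1)) -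
          (α * ∫ s in (0:ℝ)..a, (|s| + ε) ^ (α - 1))) * (b - a) := by
  refine ⟨α, hα0, fun ε hε0 hε1 a b => ?_⟩
  set f : ℝ → ℝ := fun s => (|s| + ε) ^ (α - 1) with hf
  have hcont : Continuous f := by
    apply Continuous.rpow_const (by continuity)
    intro x; left; positivity
  have hint : ∀ x y : ℝ, IntervalIntegrable f MeasureTheory.volume x y :=
    fun x y => hcont.intervalIntegrable x y
  set m : ℝ := (|a| + |b| + 1) ^ (α - 1) with hm
  have hpt : ∀ s ∈ Set.uIcc a b, m ≤ f s := by
    intro s hs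
    rw [Set.uIcc_eq_union] at hs
    have h1 : |s| ≤ |a| + |b| := by
      rcases hs with hs | hs <;>
      · rw [Set.mem_Icc] at hs
        have h2 := abs_nonneg a; have h3 := abs_nonneg b
        have := neg_abs_le a; have := le_abs_self a
        have := neg_abs_le b; have := le_abs_self b
        rw [abs_le]; constructor <;> linarith
    exact Real.rpow_le_rpow_of_nonpos (by positivity) (by linarith) (by linarith)
  have hkey : (α * ∫ s in (0:ℝ)..b, f s) - (α * ∫ s in (0:ℝ)..a, f s)
      = α * ∫ s in a..b, f s := by
    rw [← mul_sub, intervalIntegral.integral_interval_sub_left (hint 0 b) (hint 0 a)]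
  rw [hkey]
  have hm0 : 0 < m := by positivity
  rcases le_total a b with hab | hab
  · have hI : m * (b - a) ≤ ∫ s in a..b, f s := by
      have := intervalIntegral.integral_mono_on hab
        (intervalIntegrable_const (c := m)) (hint a b)
        (fun s hs => hpt s (by rwa [Set.uIcc_of_le hab]))
      rwa [intervalIntegral.integral_const, smul_eq_mul, mul_comm] at this
    nlinarith [sq_nonneg (b - a), mul_le_mul_of_nonneg_left hI hα0.le]
  · have hI : m * (a - b) ≤ ∫ s in b..a, f s := by
      have := intervalIntegral.integral_mono_on hab
        (intervalIntegrable_const (c := m)) (hint b a)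
        (fun s hs => hpt s (by rwa [Set.uIcc_of_ge hab]))
      rwa [intervalIntegral.integral_const, smul_eq_mul, mul_comm] at this
    rw [intervalIntegral.integral_symm]
    nlinarith [mul_le_mul_of_nonneg_left hI hα0.le]
end
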